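/- If X is a reflexive Banach space and T: X → Y a bounded operator, then SCS(T) = SS(T*) and SS(T) = SCS(T*). -/

import Mathlib

open NormedSpace Metric Set Filter
open scoped ENNReal

noncomputable section

/-- Hausdorff measure of noncompactness of a set. -/
def hchi {Y : Type*} [SeminormedAddCommGroup Y] (A : Set Y) : ℝ :=
  sInf { r : ℝ | ∃ F : Finset Y, ∀ a ∈ A, ∃ y ∈ F, dist a y ≤ r }

variable {X Y Z : Type*} [NormedAddCommGroup X] [NormedSpace ℝ X]
  [NormedAddCommGroup Y] [NormedSpace ℝ Y]

/-- χ(T) = Hausdorff measure of noncompactness of T(B_X). -/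
def chiOp (T : X →L[ℝ] Y) : ℝ := hchi (T '' closedBall 0 1)

/-- SS(T): the quantity measuring strict singularity. -/
def SS (T : X →L[ℝ] Y) : ℝ :=
  sSup { c : ℝ | ∃ M : Submodule ℝ X, IsClosed (M : Set X) ∧ ¬ FiniteDimensional ℝ M ∧
      c = sInf { r : ℝ | ∃ x ∈ M, ‖x‖ = 1 ∧ r = ‖T x‖ } }

/-- SS_Z(T): the quantity measuring Z-strict singularity. -/
def SSZ (Z : Type*) [NormedAddCommGroup Z] [NormedSpace ℝ Z] (T : X →L[ℝ] Y) : ℝ :=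
  sSup { r : ℝ | ∃ R : Z →L[ℝ] X, ∃ c : ℝ, 0 < c ∧ (∀ z, c * ‖z‖ ≤ ‖T (R z)‖) ∧ r = c / ‖R‖ }

/-- The adjoint (dual) operator T* : Y* → X*. -/
def adjOp (T : X →L[ℝ] Y) : StrongDual ℝ Y →L[ℝ] StrongDual ℝ X :=
  (ContinuousLinearMap.compL ℝ X Y ℝ).flip T

/-- δ(S) for a (surjective) map S: the supremum of δ > 0 with δ·B ⊆ S(B). -/
def deltaQ {W : Type*} [SeminormedAddCommGroup W] (S : X → W) : ℝ :=
  sSup { d : ℝ | 0 < d ∧ ∀ w : W, ‖w‖ ≤ d → ∃ x : X, ‖x‖ ≤ 1 ∧ S x = w }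

/-- SCS(T): the quantity measuring strict cosingularity. -/
def SCS (T : X →L[ℝ] Y) : ℝ :=
  sSup { r : ℝ | ∃ N : Submodule ℝ Y, IsClosed (N : Set Y) ∧ ¬ FiniteDimensional ℝ (Y ⧸ N) ∧
      Function.Surjective (fun x : X => (Submodule.Quotient.mk (T x) : Y ⧸ N)) ∧
      r = deltaQ (fun x : X => (Submodule.Quotient.mk (T x) : Y ⧸ N)) }

/-- SCS_Z(T): the quantity measuring Z-strict cosingularity. -/
def SCSZ (Z : Type*) [NormedAddCommGroup Z] [NormedSpace ℝ Z] (T : X →L[ℝ] Y) : ℝ :=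
  sSup { r : ℝ | ∃ S : Y →L[ℝ] Z, Function.Surjective (fun x : X => S (T x)) ∧
      r = deltaQ (fun x : X => S (T x)) / ‖S‖ }

/-- The annihilator M^⊥ in the continuous dual. -/
def annih (M : Submodule ℝ X) : Submodule ℝ (StrongDual ℝ X) where
  carrier := { f | ∀ x ∈ M, f x = 0 }
  add_mem' := by intro f g hf hg x hx; simp [hf x hx, hg x hx]
  zero_mem' := by intro x _; simp
  smul_mem' := by intro c f hf x hx; simp [hf x hx]

/-- The quantity wk_Z(A) measuring weak non-compactness. -/
def wkk (Z : Type*) [NormedAddCommGroup Z] [NormedSpace ℝ Z] (A : Set Z) : ℝ :=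
  sSup { r : ℝ | ∃ φ : StrongDual ℝ (StrongDual ℝ Z),
      StrongDual.toWeakDual φ ∈ closure (StrongDual.toWeakDual '' (inclusionInDoubleDual ℝ Z '' A)) ∧
      r = Metric.infDist φ (Set.range (inclusionInDoubleDual ℝ Z)) }

/-- A Banach space is λ-subprojective. -/
def Subprojective (lam : ℝ) (Y : Type*) [NormedAddCommGroup Y] [NormedSpace ℝ Y] : Prop :=
  ∀ M : Submodule ℝ Y, IsClosed (M : Set Y) → ¬ FiniteDimensional ℝ M →
    ∃ N : Submodule ℝ Y, N ≤ M ∧ IsClosed (N : Set Y) ∧ ¬ FiniteDimensional ℝ N ∧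
      ∃ P : Y →L[ℝ] Y, ‖P‖ ≤ lam ∧ LinearMap.range (P : Y →ₗ[ℝ] Y) = N ∧ ∀ y, P (P y) = P y

/-- A Banach space is λ-superprojective. -/
def Superprojective (lam : ℝ) (Y : Type*) [NormedAddCommGroup Y] [NormedSpace ℝ Y] : Prop :=
  ∀ M : Submodule ℝ Y, IsClosed (M : Set Y) → ¬ FiniteDimensional ℝ (Y ⧸ M) →
    ∃ N : Submodule ℝ Y, M ≤ N ∧ IsClosed (N : Set Y) ∧ ¬ FiniteDimensional ℝ (Y ⧸ N) ∧
      ∃ P : Y →L[ℝ] Y, ‖P‖ ≤ lam ∧ LinearMap.range (P : Y →ₗ[ℝ] Y) = N ∧ ∀ y, P (P y) = P y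

end

/-! A functional `f ∈ N^⊥` satisfies `d‖f‖ ≤ ‖T* f‖` as soon as `d·B ⊆ Q_N T(B)`: test `f` on
`d • y` for unit vectors `y`. Hence `SCS T ≤ SS T*`. Dually, if `T` is bounded below by `c > 0` on
`M`, Hahn–Banach on `T(M)` factors every functional on `M` through `T` at the cost of a factor
`1/c`; as restriction `X* ⧸ M^⊥ → M*` is onto and norm-decreasing, `c·B ⊆ Q_{M^⊥} T*(B)`, so
`SS T ≤ SCS T*`. For reflexive `X`, `T**` is `T` composed with the isometries `X ≃ X**` and
`Y → Y**`; `SS` is invariant under both, while `SCS` can only decrease under an isometric embedding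
of the codomain. The two inequalities applied to `T*` then close the loop.
-/

theorem deltaQ_nonneg {V W : Type*} [NormedAddCommGroup V] [SeminormedAddCommGroup W]
    (S : V → W) : 0 ≤ deltaQ S :=
  Real.sSup_nonneg fun _ hd => hd.1.le

section

variable {X Y : Type*} [NormedAddCommGroup X] [NormedSpace ℝ X]
  [NormedAddCommGroup Y] [NormedSpace ℝ Y]

theorem adjOp_apply (T : X →L[ℝ] Y) (g : StrongDual ℝ Y) (x : X) : adjOp T g x = g (T x) := rfl

theorem mem_annih {M : Submodule ℝ X} {f : StrongDual ℝ X} : f ∈ annih M ↔ ∀ x ∈ M, f x = 0 :=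
  Iff.rfl

theorem isClosed_annih (M : Submodule ℝ X) : IsClosed (annih M : Set (StrongDual ℝ X)) := by
  have : (annih M : Set (StrongDual ℝ X)) = ⋂ x ∈ M, {f | f x = 0} := by
    ext f
    simp [mem_annih]
  rw [this]
  exact isClosed_biInter fun x _ =>
    isClosed_eq (inclusionInDoubleDual ℝ X x).continuous continuous_const

theorem exists_mem_norm_eq_one {M : Submodule ℝ X} (hM : ¬ FiniteDimensional ℝ M) :
    ∃ x ∈ M, ‖x‖ = 1 := by
  have : M ≠ ⊥ := by rintro rfl; exact hM inferInstance
  obtain ⟨x, hxM, hx⟩ := Submodule.exists_mem_ne_zero_of_ne_bot this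
  exact ⟨‖x‖⁻¹ • x, M.smul_mem _ hxM, norm_smul_inv_norm hx⟩

theorem finiteDimensional_of_finiteDimensional_strongDual
    [FiniteDimensional ℝ (StrongDual ℝ X)] : FiniteDimensional ℝ X :=
  FiniteDimensional.of_injective (inclusionInDoubleDualLi ℝ : X →ₗᵢ[ℝ] _).toLinearMap
    (inclusionInDoubleDualLi ℝ).injective

theorem Submodule.Quotient.norm_apply_le_of_forall_mk {V : Type*} [SeminormedAddCommGroup V]
    {N : Submodule ℝ X} {g : X ⧸ N → V} (hg : ∀ x, ‖g (Submodule.Quotient.mk x)‖ ≤ ‖x‖)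
    (v : X ⧸ N) : ‖g v‖ ≤ ‖v‖ :=
  le_of_forall_pos_le_add fun ε hε => by
    obtain ⟨x, rfl, hx⟩ := Submodule.Quotient.norm_mk_lt v hε
    exact (hg x).trans hx.le

theorem not_finiteDimensional_annih {N : Submodule ℝ Y} (hN : IsClosed (N : Set Y))
    (hNY : ¬ FiniteDimensional ℝ (Y ⧸ N)) : ¬ FiniteDimensional ℝ (annih N) := by
  intro hfin
  -- the `IsClosed` instance makes `Y ⧸ N` a normed, not just seminormed, space
  have := hN
  let pullback : StrongDual ℝ (Y ⧸ N) →ₗ[ℝ] annih N :=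
    (adjOp N.mkQL).toLinearMap.codRestrict (annih N) fun φ y hy => by
      simp [adjOp_apply, (Submodule.Quotient.mk_eq_zero N).2 hy]
  have hinj : Function.Injective pullback := fun φ ψ h =>
    ContinuousLinearMap.ext fun v => by
      obtain ⟨y, rfl⟩ := Submodule.Quotient.mk_surjective N v
      exact congrArg (fun f : annih N => (f : StrongDual ℝ Y) y) h
  have : FiniteDimensional ℝ (StrongDual ℝ (Y ⧸ N)) :=
    .of_injective (V₂ := annih N) pullback hinj
  exact hNY finiteDimensional_of_finiteDimensional_strongDual

noncomputable def quotAnnihToDual (M : Submodule ℝ X) :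
    (StrongDual ℝ X ⧸ annih M) →ₗ[ℝ] StrongDual ℝ M :=
  (annih M).liftQ (adjOp M.subtypeL).toLinearMap fun _ hf =>
    ContinuousLinearMap.ext fun m => hf m m.2

theorem quotAnnihToDual_mk (M : Submodule ℝ X) (f : StrongDual ℝ X) :
    quotAnnihToDual M (Submodule.Quotient.mk f) = f.comp M.subtypeL := rfl

theorem quotAnnihToDual_surjective (M : Submodule ℝ X) :
    Function.Surjective (quotAnnihToDual M) := fun φ => by
  obtain ⟨f, hf, -⟩ := exists_extension_norm_eq M φ
  exact ⟨Submodule.Quotient.mk f, ContinuousLinearMap.ext hf⟩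

theorem norm_quotAnnihToDual_le (M : Submodule ℝ X) (w : StrongDual ℝ X ⧸ annih M) :
    ‖quotAnnihToDual M w‖ ≤ ‖w‖ :=
  Submodule.Quotient.norm_apply_le_of_forall_mk (g := quotAnnihToDual M) (fun f =>
    (f.opNorm_comp_le M.subtypeL).trans (mul_le_of_le_one_right (norm_nonneg f)
      (Submodule.norm_subtypeL_le M))) w

theorem not_finiteDimensional_quotient_annih {M : Submodule ℝ X} (hM : ¬ FiniteDimensional ℝ M) :
    ¬ FiniteDimensional ℝ (StrongDual ℝ X ⧸ annih M) := fun _ => by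
  have := Module.Finite.of_surjective _ (quotAnnihToDual_surjective M)
  exact hM finiteDimensional_of_finiteDimensional_strongDual

theorem SCS_nonneg (T : X →L[ℝ] Y) : 0 ≤ SCS T :=
  Real.sSup_nonneg fun _ ⟨_, _, _, _, hr⟩ => hr ▸ deltaQ_nonneg _

theorem SS_nonneg (T : X →L[ℝ] Y) : 0 ≤ SS T :=
  Real.sSup_nonneg fun _ ⟨_, _, _, hc⟩ =>
    hc ▸ Real.sInf_nonneg fun _ ⟨_, _, _, hr⟩ => hr ▸ norm_nonneg _

theorem sInf_mul_norm_le (T : X →L[ℝ] Y) {M : Submodule ℝ X} {m : X} (hm : m ∈ M) :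
    sInf {r : ℝ | ∃ x ∈ M, ‖x‖ = 1 ∧ r = ‖T x‖} * ‖m‖ ≤ ‖T m‖ := by
  rcases eq_or_ne m 0 with rfl | hm0
  · simp
  have hbdd : BddBelow {r : ℝ | ∃ x ∈ M, ‖x‖ = 1 ∧ r = ‖T x‖} :=
    ⟨0, fun _ ⟨_, _, _, hr⟩ => hr ▸ norm_nonneg _⟩
  have := csInf_le hbdd ⟨‖m‖⁻¹ • m, M.smul_mem _ hm, norm_smul_inv_norm hm0, rfl⟩
  rw [map_smul, norm_smul, norm_inv, norm_norm] at this
  rw [mul_comm]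
  exact (le_inv_mul_iff₀ (norm_pos_iff.2 hm0)).1 this

theorem SS_bddAbove (T : X →L[ℝ] Y) :
    BddAbove {c : ℝ | ∃ M : Submodule ℝ X, IsClosed (M : Set X) ∧ ¬ FiniteDimensional ℝ M ∧
      c = sInf {r : ℝ | ∃ x ∈ M, ‖x‖ = 1 ∧ r = ‖T x‖}} := by
  refine ⟨‖T‖, ?_⟩
  rintro _ ⟨M, -, hM, rfl⟩
  obtain ⟨x, hxM, hx⟩ := exists_mem_norm_eq_one hM
  simpa [hx] using (sInf_mul_norm_le T hxM).trans (T.le_opNorm x)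

theorem le_opNorm_of_closedBall_subset_image_quotient (T : X →L[ℝ] Y) {N : Submodule ℝ Y}
    (hN : IsClosed (N : Set Y)) (hNY : ¬ FiniteDimensional ℝ (Y ⧸ N)) {d : ℝ} (hd : 0 < d)
    (hball : ∀ w : Y ⧸ N, ‖w‖ ≤ d → ∃ x : X, ‖x‖ ≤ 1 ∧ Submodule.Quotient.mk (T x) = w) :
    d ≤ ‖T‖ := by
  have := hN
  have : Nontrivial (Y ⧸ N) := by
    by_contra h
    rw [not_nontrivial_iff_subsingleton] at h
    exact hNY inferInstance
  obtain ⟨w, hw⟩ := exists_norm_eq (Y ⧸ N) hd.le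
  obtain ⟨x, hx, rfl⟩ := hball w hw.le
  calc d = ‖(Submodule.Quotient.mk (T x) : Y ⧸ N)‖ := hw.symm
    _ ≤ ‖T x‖ := Submodule.Quotient.norm_mk_le N _
    _ ≤ ‖T‖ := T.unit_le_opNorm x hx

theorem SCS_bddAbove (T : X →L[ℝ] Y) :
    BddAbove {r : ℝ | ∃ N : Submodule ℝ Y, IsClosed (N : Set Y) ∧
      ¬ FiniteDimensional ℝ (Y ⧸ N) ∧
      Function.Surjective (fun x : X => (Submodule.Quotient.mk (T x) : Y ⧸ N)) ∧
      r = deltaQ (fun x : X => (Submodule.Quotient.mk (T x) : Y ⧸ N))} := by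
  refine ⟨‖T‖, ?_⟩
  rintro _ ⟨N, hN, hNY, -, rfl⟩
  exact Real.sSup_le (fun d ⟨hd, hball⟩ =>
    le_opNorm_of_closedBall_subset_image_quotient T hN hNY hd hball) (norm_nonneg T)

theorem mul_norm_le_norm_adjOp_of_mem_annih (T : X →L[ℝ] Y) {N : Submodule ℝ Y} {d : ℝ}
    (hd : 0 < d)
    (hball : ∀ w : Y ⧸ N, ‖w‖ ≤ d → ∃ x : X, ‖x‖ ≤ 1 ∧ Submodule.Quotient.mk (T x) = w)
    {f : StrongDual ℝ Y} (hf : f ∈ annih N) : d * ‖f‖ ≤ ‖adjOp T f‖ := by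
  rw [mul_comm, ← le_div_iff₀ hd]
  refine ContinuousLinearMap.opNorm_le_of_unit_norm (by positivity) fun y hy => ?_
  have hdy : ‖(Submodule.Quotient.mk (d • y) : Y ⧸ N)‖ ≤ d := by
    simpa [norm_smul, hy, abs_of_pos hd] using Submodule.Quotient.norm_mk_le N (d • y)
  obtain ⟨x, hx, hTx⟩ := hball _ hdy
  have hfTx : f (T x) = d * f y := by
    simpa [sub_eq_zero] using hf _ ((Submodule.Quotient.eq N).1 hTx)
  rw [le_div_iff₀ hd]
  calc ‖f y‖ * d = ‖adjOp T f x‖ := by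
        rw [adjOp_apply, hfTx, norm_mul, Real.norm_of_nonneg hd.le, mul_comm]
    _ ≤ ‖adjOp T f‖ := (adjOp T f).unit_le_opNorm x hx

theorem SCS_le_SS_adjOp (T : X →L[ℝ] Y) : SCS T ≤ SS (adjOp T) := by
  refine Real.sSup_le ?_ (SS_nonneg _)
  rintro _ ⟨N, hN, hNY, -, rfl⟩
  refine Real.sSup_le ?_ (SS_nonneg _)
  rintro d ⟨hd, hball⟩
  have hannih := not_finiteDimensional_annih hN hNY
  obtain ⟨f₀, hf₀, hf₀1⟩ := exists_mem_norm_eq_one hannih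
  calc d ≤ sInf {r : ℝ | ∃ f ∈ annih N, ‖f‖ = 1 ∧ r = ‖adjOp T f‖} := by
        refine le_csInf ⟨_, f₀, hf₀, hf₀1, rfl⟩ ?_
        rintro _ ⟨f, hf, hf1, rfl⟩
        simpa [hf1] using mul_norm_le_norm_adjOp_of_mem_annih T hd hball hf
    _ ≤ SS (adjOp T) := le_csSup (SS_bddAbove _) ⟨annih N, isClosed_annih N, hannih, rfl⟩

theorem exists_dual_comp_eq_of_bounded_below (T : X →L[ℝ] Y) {M : Submodule ℝ X} {c : ℝ}
    (hc : 0 < c) (hlow : ∀ m ∈ M, c * ‖m‖ ≤ ‖T m‖) (φ : StrongDual ℝ M) :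
    ∃ g : StrongDual ℝ Y, c * ‖g‖ ≤ ‖φ‖ ∧ ∀ m : M, g (T m) = φ m := by
  let j : M →ₗ[ℝ] Y := T.toLinearMap.comp M.subtype
  have hj : Function.Injective j := (injective_iff_map_eq_zero j).2 fun m hm => by
    have := hlow m m.2
    rw [show T m = 0 from hm, norm_zero] at this
    exact norm_le_zero_iff.1 (nonpos_of_mul_nonpos_right this hc)
  let e := LinearEquiv.ofInjective j hj
  let ψ : StrongDual ℝ (LinearMap.range j) :=
    (φ.toLinearMap.comp e.symm.toLinearMap).mkContinuous (‖φ‖ / c) fun w => by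
      have hw : c * ‖e.symm w‖ ≤ ‖w‖ :=
        (hlow _ (e.symm w).2).trans_eq (congrArg norm (LinearEquiv.ofInjective_symm_apply j w))
      calc ‖φ (e.symm w)‖ ≤ ‖φ‖ * ‖e.symm w‖ := φ.le_opNorm _
        _ ≤ ‖φ‖ * (‖w‖ / c) := by gcongr; rwa [le_div_iff₀' hc]
        _ = ‖φ‖ / c * ‖w‖ := by ring
  obtain ⟨g, hg, hgψ⟩ := exists_extension_norm_eq _ ψ
  refine ⟨g, ?_, fun m => ?_⟩
  · rw [hgψ, mul_comm, ← le_div_iff₀ hc]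
    exact LinearMap.mkContinuous_norm_le _ (by positivity) _
  · simpa [ψ, e, j] using hg (e m)

theorem exists_mk_adjOp_eq_of_bounded_below (T : X →L[ℝ] Y) {M : Submodule ℝ X} {c : ℝ}
    (hc : 0 < c) (hlow : ∀ m ∈ M, c * ‖m‖ ≤ ‖T m‖) (w : StrongDual ℝ X ⧸ annih M) :
    ∃ g : StrongDual ℝ Y, c * ‖g‖ ≤ ‖w‖ ∧ Submodule.Quotient.mk (adjOp T g) = w := by
  obtain ⟨f, rfl⟩ := Submodule.Quotient.mk_surjective _ w
  obtain ⟨g, hg, hgT⟩ :=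
    exists_dual_comp_eq_of_bounded_below T hc hlow (quotAnnihToDual M (Submodule.Quotient.mk f))
  refine ⟨g, hg.trans (norm_quotAnnihToDual_le M _), (Submodule.Quotient.eq _).2 fun x hx => ?_⟩
  simpa [adjOp_apply, sub_eq_zero, quotAnnihToDual_mk] using hgT ⟨x, hx⟩

theorem SS_le_SCS_adjOp (T : X →L[ℝ] Y) : SS T ≤ SCS (adjOp T) := by
  refine Real.sSup_le ?_ (SCS_nonneg _)
  rintro _ ⟨M, -, hM, rfl⟩
  set c := sInf {r : ℝ | ∃ x ∈ M, ‖x‖ = 1 ∧ r = ‖T x‖}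
  rcases le_or_gt c 0 with hc | hc
  · exact hc.trans (SCS_nonneg _)
  have hlift := exists_mk_adjOp_eq_of_bounded_below T hc fun m hm => sInf_mul_norm_le T hm
  have hNY := not_finiteDimensional_quotient_annih hM
  have hsurj : Function.Surjective fun g : StrongDual ℝ Y =>
      (Submodule.Quotient.mk (adjOp T g) : StrongDual ℝ X ⧸ annih M) := fun w =>
    (hlift w).imp fun _ => And.right
  have hball : ∀ w : StrongDual ℝ X ⧸ annih M, ‖w‖ ≤ c →
      ∃ g : StrongDual ℝ Y, ‖g‖ ≤ 1 ∧ Submodule.Quotient.mk (adjOp T g) = w := fun w hw =>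
    (hlift w).imp fun _ ⟨hg, hgw⟩ => ⟨(mul_le_iff_le_one_right hc).1 (hg.trans hw), hgw⟩
  calc c ≤ deltaQ fun g : StrongDual ℝ Y =>
        (Submodule.Quotient.mk (adjOp T g) : StrongDual ℝ X ⧸ annih M) :=
        le_csSup ⟨_, fun d ⟨hd, hball⟩ => le_opNorm_of_closedBall_subset_image_quotient
          (adjOp T) (isClosed_annih M) hNY hd hball⟩ ⟨hc, hball⟩
    _ ≤ SCS (adjOp T) := le_csSup (SCS_bddAbove _) ⟨annih M, isClosed_annih M, hNY, hsurj, rfl⟩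

end

section

variable {X Y Z W : Type*} [NormedAddCommGroup X] [NormedSpace ℝ X]
  [NormedAddCommGroup Y] [NormedSpace ℝ Y] [NormedAddCommGroup Z] [NormedSpace ℝ Z]
  [NormedAddCommGroup W] [NormedSpace ℝ W]

theorem SS_linearIsometry_comp (T : X →L[ℝ] Y) (J : Y →ₗᵢ[ℝ] W) :
    SS (J.toContinuousLinearMap.comp T) = SS T := by
  simp only [SS, ContinuousLinearMap.comp_apply, LinearIsometry.coe_toContinuousLinearMap,
    LinearIsometry.norm_map]

theorem SS_le_SS_comp_linearIsometryEquiv (S : Z →L[ℝ] W) (e : X ≃ₗᵢ[ℝ] Z) :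
    SS S ≤ SS (S.comp (e : X →L[ℝ] Z)) := by
  refine Real.sSup_le ?_ (SS_nonneg _)
  rintro _ ⟨M, hM, hMZ, rfl⟩
  refine le_csSup (SS_bddAbove _)
    ⟨M.comap (e.toLinearEquiv : X →ₗ[ℝ] Z), hM.preimage e.continuous, fun _ => hMZ ?_, ?_⟩
  · rw [← Submodule.map_comap_eq_of_surjective e.surjective M]
    exact Module.Finite.map _ _
  · congr 1
    ext r
    constructor
    · rintro ⟨z, hz, hz1, rfl⟩
      exact ⟨e.symm z, by simpa using hz, by simpa using hz1, by simp⟩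
    · rintro ⟨x, hx, hx1, rfl⟩
      exact ⟨e x, hx, by simpa using hx1, rfl⟩

theorem SS_comp_linearIsometryEquiv (S : Z →L[ℝ] W) (e : X ≃ₗᵢ[ℝ] Z) :
    SS (S.comp (e : X →L[ℝ] Z)) = SS S := by
  refine le_antisymm ?_ (SS_le_SS_comp_linearIsometryEquiv S e)
  simpa [ContinuousLinearMap.comp_assoc] using
    SS_le_SS_comp_linearIsometryEquiv (S.comp (e : X →L[ℝ] Z)) e.symm

theorem deltaQ_comp_linearIsometryEquiv {V : Type*} [SeminormedAddCommGroup V] (f : Z → V)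
    (e : X ≃ₗᵢ[ℝ] Z) : deltaQ (f ∘ e) = deltaQ f := by
  simp only [deltaQ, Function.comp_apply, e.surjective.exists, e.norm_map]

theorem SCS_comp_linearIsometryEquiv (S : Z →L[ℝ] W) (e : X ≃ₗᵢ[ℝ] Z) :
    SCS (S.comp (e : X →L[ℝ] Z)) = SCS S := by
  have hδ := fun N : Submodule ℝ W =>
    deltaQ_comp_linearIsometryEquiv (fun z => (Submodule.Quotient.mk (S z) : W ⧸ N)) e
  have hsurj := fun N : Submodule ℝ W =>
    e.surjective.of_comp_iff (fun z => (Submodule.Quotient.mk (S z) : W ⧸ N))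
  simp only [Function.comp_def] at hδ hsurj
  simp only [SCS, ContinuousLinearMap.comp_apply, ContinuousLinearEquiv.coe_coe,
    LinearIsometryEquiv.coe_toContinuousLinearEquiv, hδ, hsurj]

theorem SCS_linearIsometry_comp_le (T : X →L[ℝ] Y) (J : Y →ₗᵢ[ℝ] W) :
    SCS (J.toContinuousLinearMap.comp T) ≤ SCS T := by
  refine Real.sSup_le ?_ (SCS_nonneg T)
  rintro _ ⟨N, hN, hNW, hsurj, rfl⟩
  set N' := N.comap J.toLinearMap
  let κ := N'.mapQ N J.toLinearMap le_rfl
  have hκinj : Function.Injective κ := by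
    rw [← LinearMap.ker_eq_bot, Submodule.ker_mapQ, Submodule.mkQ_map_self]
  have hκsurj : Function.Surjective κ := fun w =>
    let ⟨x, hx⟩ := hsurj w
    ⟨Submodule.Quotient.mk (T x), hx⟩
  have hsurj' : Function.Surjective fun x : X => (Submodule.Quotient.mk (T x) : Y ⧸ N') :=
    fun v => let ⟨x, hx⟩ := hsurj (κ v); ⟨x, hκinj hx⟩
  have hN'Y : ¬ FiniteDimensional ℝ (Y ⧸ N') := fun _ =>
    hNW (Module.Finite.of_surjective κ hκsurj)
  have hκnorm : ∀ v, ‖κ v‖ ≤ ‖v‖ := Submodule.Quotient.norm_apply_le_of_forall_mk fun y =>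
    (Submodule.Quotient.norm_mk_le N _).trans_eq (J.norm_map y)
  have hN' : IsClosed (N' : Set Y) := hN.preimage J.continuous
  refine le_trans ?_ (le_csSup (SCS_bddAbove T) ⟨N', hN', hN'Y, hsurj', rfl⟩)
  refine Real.sSup_le ?_ (deltaQ_nonneg _)
  rintro d ⟨hd, hball⟩
  refine le_csSup ⟨_, fun d ⟨hd, hball⟩ =>
    le_opNorm_of_closedBall_subset_image_quotient T hN' hN'Y hd hball⟩ ⟨hd, fun v hv => ?_⟩
  obtain ⟨x, hx, hTx⟩ := hball (κ v) ((hκnorm v).trans hv)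
  exact ⟨x, hx, hκinj hTx⟩

end

theorem stmt8_general {X Y : Type*} [NormedAddCommGroup X] [NormedSpace ℝ X]
    [NormedAddCommGroup Y] [NormedSpace ℝ Y] (T : X →L[ℝ] Y)
    (hrefl : Function.Surjective (inclusionInDoubleDual ℝ X)) :
    SCS T = SS (adjOp T) ∧ SS T = SCS (adjOp T) := by
  let ιX := LinearIsometryEquiv.ofSurjective (inclusionInDoubleDualLi ℝ) hrefl
  have hbidual : (adjOp (adjOp T)).comp (ιX : X →L[ℝ] _) =
      (inclusionInDoubleDualLi ℝ).toContinuousLinearMap.comp T := rfl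
  have hSS : SS (adjOp (adjOp T)) = SS T := by
    rw [← SS_comp_linearIsometryEquiv _ ιX, hbidual, SS_linearIsometry_comp]
  have hSCS : SCS (adjOp (adjOp T)) ≤ SCS T := by
    rw [← SCS_comp_linearIsometryEquiv _ ιX, hbidual]
    exact SCS_linearIsometry_comp_le T _
  exact ⟨(SCS_le_SS_adjOp T).antisymm ((SS_le_SCS_adjOp _).trans hSCS),
    (SS_le_SCS_adjOp T).antisymm ((SCS_le_SS_adjOp _).trans hSS.le)⟩

theorem stmt8 {X Y : Type*} [NormedAddCommGroup X] [NormedSpace ℝ X] [CompleteSpace X]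
    [NormedAddCommGroup Y] [NormedSpace ℝ Y] [CompleteSpace Y] (T : X →L[ℝ] Y)
    (hrefl : Function.Surjective (inclusionInDoubleDual ℝ X)) :
    SCS T = SS (adjOp T) ∧ SS T = SCS (adjOp T) :=
  stmt8_general T hrefl
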